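/- Let χ : [n] → {•, ∘}, let π = {V1,...,Vt} ∈ INC(χ), and let σ be a partition of [n] with σ ≤ π. Then σ ∈ INC(χ) if and only if for every s = 1,...,t, the restriction σ|_{Vs} is interval-noncrossing with respect to the restricted coloring χ|_{Vs} on the ordered set Vs. -/

import Mathlib

open scoped Classical

section Defs

variable {α : Type*}

/-- `P` is a partition of the finite set `S`: blocks are nonempty subsets of `S`
and every element of `S` lies in a unique block. -/
def IsPartitionOn (S : Finset α) (P : Finset (Finset α)) : Prop :=
  (∀ B ∈ P, B.Nonempty ∧ B ⊆ S) ∧ ∀ x ∈ S, ∃! B, B ∈ P ∧ x ∈ B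

/-- `P` is noncrossing: no `s₁ < r₁ < s₂ < r₂` with `s₁, s₂` in one block and
`r₁, r₂` in a different block. -/
def Noncrossing [LinearOrder α] (P : Finset (Finset α)) : Prop :=
  ∀ V ∈ P, ∀ W ∈ P, V ≠ W →
    ¬ ∃ s₁ r₁ s₂ r₂, s₁ ∈ V ∧ s₂ ∈ V ∧ r₁ ∈ W ∧ r₂ ∈ W ∧ s₁ < r₁ ∧ r₁ < s₂ ∧ s₂ < r₂

/-- A block `V` is inner if some other block `W` has elements `s, t` with
`s < v < t` for all `v ∈ V`. -/
def IsInnerBlock [LinearOrder α] (P : Finset (Finset α)) (V : Finset α) : Prop :=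
  ∃ W ∈ P, W ≠ V ∧ ∃ s ∈ W, ∃ t ∈ W, ∀ v ∈ V, s < v ∧ v < t

/-- `P` is an interval partition: no `s₁ < r < s₂` with `s₁, s₂` in one block
and `r` in a different block. -/
def IsIntervalPartition [LinearOrder α] (P : Finset (Finset α)) : Prop :=
  ∀ V ∈ P, ∀ W ∈ P, V ≠ W →
    ¬ ∃ s₁ r s₂, s₁ ∈ V ∧ s₂ ∈ V ∧ r ∈ W ∧ s₁ < r ∧ r < s₂

/-- Reversed refinement order: every block of `P` is contained in a block of `Q`. -/
def Refines (P Q : Finset (Finset α)) : Prop := ∀ B ∈ P, ∃ C ∈ Q, B ⊆ C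

/-- Noncrossing partition of the finite ordered set `S`. -/
def NCOn [LinearOrder α] (S : Finset α) (P : Finset (Finset α)) : Prop :=
  IsPartitionOn S P ∧ Noncrossing P

/-- Interval-noncrossing partition of `S` w.r.t. the coloring `χ`
(`χ k = true` means `k` is colored `∘`): a noncrossing partition such that
no `∘`-colored element lies in an inner block. -/
def INCOn [LinearOrder α] (S : Finset α) (χ : α → Bool) (P : Finset (Finset α)) : Prop :=
  IsPartitionOn S P ∧ Noncrossing P ∧
    ∀ V ∈ P, IsInnerBlock P V → ∀ k ∈ V, χ k = false

/-- Restriction of a partition to a subset: nonempty intersections of blocks with `A`. -/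
def restrictPart [DecidableEq α] (P : Finset (Finset α)) (A : Finset α) : Finset (Finset α) :=
  (P.image (· ∩ A)).filter (·.Nonempty)

end Defs

/-!
Since every block of `σ` lies in a block of `π`, two blocks of `σ` either lie in the same
block `V` of `π`, where they are blocks of `σ|_V`, or in different blocks of `π`. A crossing of
the latter kind would be a crossing in `π`. A block `B ⊆ V` nested inside a block of `σ` lying
in another block `W` of `π` forces, by noncrossingness of `π`, the whole of `V` to be nested
inside `W`; so `V` is inner in `π`, and its elements are `•`.
-/

section Partitions

variable {α : Type*} {S : Finset α} {P π σ : Finset (Finset α)}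

theorem IsPartitionOn.eq_of_mem_of_mem (h : IsPartitionOn S P) {B C : Finset α}
    (hB : B ∈ P) (hC : C ∈ P) {x : α} (hxB : x ∈ B) (hxC : x ∈ C) : B = C := by
  obtain ⟨D, -, hD⟩ := h.2 x ((h.1 B hB).2 hxB)
  exact (hD B ⟨hB, hxB⟩).trans (hD C ⟨hC, hxC⟩).symm

theorem Refines.subset_of_mem_of_mem (hle : Refines σ π) (hπ : IsPartitionOn S π)
    {B V : Finset α} (hB : B ∈ σ) (hV : V ∈ π) {x : α} (hxB : x ∈ B) (hxV : x ∈ V) :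
    B ⊆ V := by
  obtain ⟨C, hC, hBC⟩ := hle B hB
  rwa [← hπ.eq_of_mem_of_mem hC hV (hBC hxB) hxV]

theorem mem_restrictPart_iff [DecidableEq α] (hσ : IsPartitionOn S σ) (hπ : IsPartitionOn S π)
    (hle : Refines σ π) {V : Finset α} (hV : V ∈ π) {C : Finset α} :
    C ∈ restrictPart σ V ↔ C ∈ σ ∧ C ⊆ V := by
  simp only [restrictPart, Finset.mem_filter, Finset.mem_image]
  constructor
  · rintro ⟨⟨B, hB, rfl⟩, x, hx⟩
    obtain ⟨hxB, hxV⟩ := Finset.mem_inter.1 hx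
    have hBV := hle.subset_of_mem_of_mem hπ hB hV hxB hxV
    rw [Finset.inter_eq_left.2 hBV]
    exact ⟨hB, hBV⟩
  · rintro ⟨hC, hCV⟩
    exact ⟨⟨C, hC, Finset.inter_eq_left.2 hCV⟩, (hσ.1 C hC).1⟩

theorem IsPartitionOn.restrictPart [DecidableEq α] (hσ : IsPartitionOn S σ)
    (hπ : IsPartitionOn S π) (hle : Refines σ π) {V : Finset α} (hV : V ∈ π) :
    IsPartitionOn V (restrictPart σ V) := by
  have hmem := fun C => mem_restrictPart_iff (C := C) hσ hπ hle hV
  refine ⟨fun B hB => ⟨(hσ.1 B ((hmem B).1 hB).1).1, ((hmem B).1 hB).2⟩, fun x hxV => ?_⟩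
  obtain ⟨B, ⟨hB, hxB⟩, hBu⟩ := hσ.2 x ((hπ.1 V hV).2 hxV)
  refine ⟨B, ⟨(hmem B).2 ⟨hB, hle.subset_of_mem_of_mem hπ hB hV hxB hxV⟩, hxB⟩, ?_⟩
  rintro C ⟨hC, hxC⟩
  exact hBu C ⟨((hmem C).1 hC).1, hxC⟩

variable [LinearOrder α]

theorem Noncrossing.mono {Q : Finset (Finset α)} (h : Noncrossing P) (hQP : Q ⊆ P) :
    Noncrossing Q :=
  fun V hV W hW => h V (hQP hV) W (hQP hW)

theorem IsInnerBlock.mono {Q : Finset (Finset α)} {V : Finset α} (h : IsInnerBlock Q V)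
    (hQP : Q ⊆ P) : IsInnerBlock P V := by
  obtain ⟨W, hW, hWV, hst⟩ := h
  exact ⟨W, hQP hW, hWV, hst⟩

/-- An element of `V` outside `(s, t)` would, together with `b`, cross `W`. -/
theorem Noncrossing.isInnerBlock_of_lt_of_lt (hNC : Noncrossing P) (hP : IsPartitionOn S P)
    {V W : Finset α} (hV : V ∈ P) (hW : W ∈ P) (hVW : V ≠ W) {s t b : α}
    (hs : s ∈ W) (ht : t ∈ W) (hb : b ∈ V) (hsb : s < b) (hbt : b < t) :
    IsInnerBlock P V := by
  refine ⟨W, hW, hVW.symm, s, hs, t, ht, fun v hv => ⟨?_, ?_⟩⟩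
  · refine lt_of_not_ge fun hvs =>
      hNC V hV W hW hVW ⟨v, s, b, t, hv, hb, hs, ht, ?_, hsb, hbt⟩
    exact hvs.lt_of_ne fun hvs => hVW (hP.eq_of_mem_of_mem hV hW hv (hvs ▸ hs))
  · refine lt_of_not_ge fun htv =>
      hNC W hW V hV hVW.symm ⟨s, b, t, v, hs, ht, hb, hv, hsb, hbt, ?_⟩
    exact htv.lt_of_ne fun htv => hVW (hP.eq_of_mem_of_mem hV hW hv (htv ▸ ht))

theorem Noncrossing.of_restrictPart (hσ : IsPartitionOn S σ) (hπ : IsPartitionOn S π)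
    (hle : Refines σ π) (hπNC : Noncrossing π)
    (hres : ∀ V ∈ π, Noncrossing (restrictPart σ V)) : Noncrossing σ := by
  rintro B hB C hC hBC hcross
  obtain ⟨V, hV, hBV⟩ := hle B hB
  obtain ⟨W, hW, hCW⟩ := hle C hC
  by_cases hVW : V = W
  · subst hVW
    exact hres V hV B ((mem_restrictPart_iff hσ hπ hle hV).2 ⟨hB, hBV⟩)
      C ((mem_restrictPart_iff hσ hπ hle hV).2 ⟨hC, hCW⟩) hBC hcross
  · obtain ⟨s₁, r₁, s₂, r₂, hs₁, hs₂, hr₁, hr₂, h₁, h₂, h₃⟩ := hcross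
    exact hπNC V hV W hW hVW
      ⟨s₁, r₁, s₂, r₂, hBV hs₁, hBV hs₂, hCW hr₁, hCW hr₂, h₁, h₂, h₃⟩

theorem innerBlocks_uncolored_of_restrictPart {χ : α → Bool} (hσ : IsPartitionOn S σ)
    (hπ : INCOn S χ π) (hle : Refines σ π)
    (hres : ∀ V ∈ π, ∀ B ∈ restrictPart σ V, IsInnerBlock (restrictPart σ V) B →
      ∀ k ∈ B, χ k = false) :
    ∀ B ∈ σ, IsInnerBlock σ B → ∀ k ∈ B, χ k = false := by
  obtain ⟨hπP, hπNC, hπI⟩ := hπ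
  rintro B hB ⟨C, hC, hCB, s, hs, t, ht, hst⟩ k hk
  obtain ⟨V, hV, hBV⟩ := hle B hB
  obtain ⟨W, hW, hCW⟩ := hle C hC
  by_cases hVW : V = W
  · subst hVW
    exact hres V hV B ((mem_restrictPart_iff hσ hπP hle hV).2 ⟨hB, hBV⟩)
      ⟨C, (mem_restrictPart_iff hσ hπP hle hV).2 ⟨hC, hCW⟩, hCB, s, hs, t, ht, hst⟩ k hk
  · obtain ⟨b, hb⟩ := (hσ.1 B hB).1
    have hinner : IsInnerBlock π V := hπNC.isInnerBlock_of_lt_of_lt hπP hV hW hVW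
      (hCW hs) (hCW ht) (hBV hb) (hst b hb).1 (hst b hb).2
    exact hπI V hV hinner k (hBV hk)

end Partitions

/-- for π ∈ INC(χ) and a partition σ ≤ π, one has σ ∈ INC(χ) iff
every restriction σ|_V to a block V of π is interval-noncrossing w.r.t. χ|_V. -/
theorem INC_iff_restrictions_INC {n : ℕ} (χ : Fin n → Bool)
    (π σ : Finset (Finset (Fin n)))
    (hπ : INCOn Finset.univ χ π)
    (hσ : IsPartitionOn Finset.univ σ) (hle : Refines σ π) :
    INCOn Finset.univ χ σ ↔ ∀ V ∈ π, INCOn V χ (restrictPart σ V) := by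
  have hsub : ∀ V ∈ π, restrictPart σ V ⊆ σ := fun V hV C hC =>
    ((mem_restrictPart_iff hσ hπ.1 hle hV).1 hC).1
  constructor
  · rintro ⟨-, hσNC, hσI⟩ V hV
    exact ⟨hσ.restrictPart hπ.1 hle hV, hσNC.mono (hsub V hV),
      fun B hB hinner => hσI B (hsub V hV hB) (hinner.mono (hsub V hV))⟩
  · intro hres
    exact ⟨hσ, .of_restrictPart hσ hπ.1 hle hπ.2.1 fun V hV => (hres V hV).2.1,
      innerBlocks_uncolored_of_restrictPart hσ hπ hle fun V hV => (hres V hV).2.2⟩
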